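/- arXiv:1611.06288 — 5 statements merged into one kernel-verified Lean document; each statement's English description precedes it below -/
import Mathlib

section
/- Discrete interpolation inequality: for every periodic grid function φ : (ZMod m)³ → ℝ and every real α > 0, one has ‖Δ_h φ‖₂² ≤ (1/(3α²)) ‖φ‖₂² + (2α/3) ‖∇_h(Δ_h φ)‖₂². -/
open Finset Real

/-- The periodic 3D grid with `m` points in each direction. -/
abbrev Grid (m : ℕ) := ZMod m × ZMod m × ZMod m

/-- Forward difference in the `x` direction, with mesh size `h`. -/
noncomputable def Dx {m : ℕ} (h : ℝ) (φ : Grid m → ℝ) (p : Grid m) : ℝ :=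
  (φ (p.1 + 1, p.2.1, p.2.2) - φ p) / h

/-- Forward difference in the `y` direction, with mesh size `h`. -/
noncomputable def Dy {m : ℕ} (h : ℝ) (φ : Grid m → ℝ) (p : Grid m) : ℝ :=
  (φ (p.1, p.2.1 + 1, p.2.2) - φ p) / h

/-- Forward difference in the `z` direction, with mesh size `h`. -/
noncomputable def Dz {m : ℕ} (h : ℝ) (φ : Grid m → ℝ) (p : Grid m) : ℝ :=
  (φ (p.1, p.2.1, p.2.2 + 1) - φ p) / h

/-- The standard 7-point discrete Laplacian with mesh size `h`. -/
noncomputable def lapH {m : ℕ} (h : ℝ) (φ : Grid m → ℝ) (p : Grid m) : ℝ :=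
  (φ (p.1 + 1, p.2.1, p.2.2) + φ (p.1 - 1, p.2.1, p.2.2)
    + φ (p.1, p.2.1 + 1, p.2.2) + φ (p.1, p.2.1 - 1, p.2.2)
    + φ (p.1, p.2.1, p.2.2 + 1) + φ (p.1, p.2.1, p.2.2 - 1)
    - 6 * φ p) / h ^ 2

/-- Discrete `L²` inner product `⟨f, g⟩ = h³ Σ f g`. -/
noncomputable def ip {m : ℕ} [NeZero m] (h : ℝ) (f g : Grid m → ℝ) : ℝ :=
  h ^ 3 * ∑ p : Grid m, f p * g p

/-- Square of the discrete `L²` norm. -/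
noncomputable def norm2sq {m : ℕ} [NeZero m] (h : ℝ) (f : Grid m → ℝ) : ℝ :=
  h ^ 3 * ∑ p : Grid m, (f p) ^ 2

/-- The discrete `L²` norm. -/
noncomputable def norm2 {m : ℕ} [NeZero m] (h : ℝ) (f : Grid m → ℝ) : ℝ :=
  Real.sqrt (norm2sq h f)

/-- Fourth power of the discrete `L⁴` norm. -/
noncomputable def norm4p4 {m : ℕ} [NeZero m] (h : ℝ) (f : Grid m → ℝ) : ℝ :=
  h ^ 3 * ∑ p : Grid m, (f p) ^ 4

/-- Square of the discrete gradient norm `‖∇_h f‖₂²`. -/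
noncomputable def gradsq {m : ℕ} [NeZero m] (h : ℝ) (f : Grid m → ℝ) : ℝ :=
  h ^ 3 * ∑ p : Grid m, ((Dx h f p) ^ 2 + (Dy h f p) ^ 2 + (Dz h f p) ^ 2)

/-- Square of the discrete `H²` norm `‖f‖_{2,2}²`. -/
noncomputable def h22sq {m : ℕ} [NeZero m] (h : ℝ) (f : Grid m → ℝ) : ℝ :=
  norm2sq h f + gradsq h f + norm2sq h (lapH h f)

/-- The discrete maximum norm `‖f‖_∞`. -/
noncomputable def normInf {m : ℕ} [NeZero m] (f : Grid m → ℝ) : ℝ :=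
  ⨆ p : Grid m, |f p|

/-- The discrete PFC energy `F_h`. -/
noncomputable def Fh {m : ℕ} [NeZero m] (h ε : ℝ) (φ : Grid m → ℝ) : ℝ :=
  (1 / 4) * norm4p4 h φ + ((1 - ε) / 2) * norm2sq h φ - gradsq h φ
    + (1 / 2) * norm2sq h (lapH h φ)

/-- The discrete chemical potential `μ^{κ+1/2}` of the second-order scheme, built from
`a = φ^{κ-1}`, `b = φ^κ`, `c = φ^{κ+1}`. -/
noncomputable def mu {m : ℕ} (h ε : ℝ) (a b c : Grid m → ℝ) : Grid m → ℝ :=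
  fun p =>
    (1 / 2) * (c p + b p) * ((1 / 2) * ((c p) ^ 2 + (b p) ^ 2))
      + (1 - ε) * ((1 / 2) * (c p + b p))
      + 3 * lapH h b p - lapH h a p
      + lapH h (fun q => (1 / 2) * lapH h (fun r => c r + b r) q) p

/-- One step of the second-order PFC scheme:
`(φ^{κ+1} - φ^κ)/τ = Δ_h μ^{κ+1/2}` with `a = φ^{κ-1}`, `b = φ^κ`, `c = φ^{κ+1}`. -/
def SchemeStep {m : ℕ} (h τ ε : ℝ) (a b c : Grid m → ℝ) : Prop :=
  ∀ p : Grid m, (c p - b p) / τ = lapH h (mu h ε a b c) p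

/-- Shift equivalence in the `x` direction. -/
def exShift (m : ℕ) : Grid m ≃ Grid m where
  toFun p := (p.1 + 1, p.2.1, p.2.2)
  invFun p := (p.1 - 1, p.2.1, p.2.2)
  left_inv p := by simp
  right_inv p := by simp

/-- Shift equivalence in the `y` direction. -/
def eyShift (m : ℕ) : Grid m ≃ Grid m where
  toFun p := (p.1, p.2.1 + 1, p.2.2)
  invFun p := (p.1, p.2.1 - 1, p.2.2)
  left_inv p := by simp
  right_inv p := by simp

/-- Shift equivalence in the `z` direction. -/
def ezShift (m : ℕ) : Grid m ≃ Grid m where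
  toFun p := (p.1, p.2.1, p.2.2 + 1)
  invFun p := (p.1, p.2.1, p.2.2 - 1)
  left_inv p := by simp
  right_inv p := by simp

lemma ibp_aux {m : ℕ} [NeZero m] (h : ℝ) (hne : h ≠ 0) (f g : Grid m → ℝ) :
    ∑ p : Grid m, f p * lapH h g p
      = -∑ p : Grid m, (Dx h f p * Dx h g p + Dy h f p * Dy h g p + Dz h f p * Dz h g p) := by
  have hx1 : ∑ p : Grid m, f (p.1 + 1, p.2.1, p.2.2) * g p
      = ∑ p : Grid m, f p * g (p.1 - 1, p.2.1, p.2.2) := by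
    have := Equiv.sum_comp (exShift m) (fun p : Grid m => f p * g (p.1 - 1, p.2.1, p.2.2))
    simpa [exShift] using this
  have hx2 : ∑ p : Grid m, f (p.1 + 1, p.2.1, p.2.2) * g (p.1 + 1, p.2.1, p.2.2)
      = ∑ p : Grid m, f p * g p := by
    have := Equiv.sum_comp (exShift m) (fun p : Grid m => f p * g p)
    simpa [exShift] using this
  have hy1 : ∑ p : Grid m, f (p.1, p.2.1 + 1, p.2.2) * g p
      = ∑ p : Grid m, f p * g (p.1, p.2.1 - 1, p.2.2) := by
    have := Equiv.sum_comp (eyShift m) (fun p : Grid m => f p * g (p.1, p.2.1 - 1, p.2.2))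
    simpa [eyShift] using this
  have hy2 : ∑ p : Grid m, f (p.1, p.2.1 + 1, p.2.2) * g (p.1, p.2.1 + 1, p.2.2)
      = ∑ p : Grid m, f p * g p := by
    have := Equiv.sum_comp (eyShift m) (fun p : Grid m => f p * g p)
    simpa [eyShift] using this
  have hz1 : ∑ p : Grid m, f (p.1, p.2.1, p.2.2 + 1) * g p
      = ∑ p : Grid m, f p * g (p.1, p.2.1, p.2.2 - 1) := by
    have := Equiv.sum_comp (ezShift m) (fun p : Grid m => f p * g (p.1, p.2.1, p.2.2 - 1))
    simpa [ezShift] using this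
  have hz2 : ∑ p : Grid m, f (p.1, p.2.1, p.2.2 + 1) * g (p.1, p.2.1, p.2.2 + 1)
      = ∑ p : Grid m, f p * g p := by
    have := Equiv.sum_comp (ezShift m) (fun p : Grid m => f p * g p)
    simpa [ezShift] using this
  have hpt : ∀ p : Grid m,
      f p * lapH h g p + (Dx h f p * Dx h g p + Dy h f p * Dy h g p + Dz h f p * Dz h g p)
      = ((f p * g (p.1 - 1, p.2.1, p.2.2) - f (p.1 + 1, p.2.1, p.2.2) * g p)
        + (f (p.1 + 1, p.2.1, p.2.2) * g (p.1 + 1, p.2.1, p.2.2) - f p * g p)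
        + (f p * g (p.1, p.2.1 - 1, p.2.2) - f (p.1, p.2.1 + 1, p.2.2) * g p)
        + (f (p.1, p.2.1 + 1, p.2.2) * g (p.1, p.2.1 + 1, p.2.2) - f p * g p)
        + (f p * g (p.1, p.2.1, p.2.2 - 1) - f (p.1, p.2.1, p.2.2 + 1) * g p)
        + (f (p.1, p.2.1, p.2.2 + 1) * g (p.1, p.2.1, p.2.2 + 1) - f p * g p)) / h ^ 2 := by
    intro p
    unfold lapH Dx Dy Dz
    field_simp
    ring
  have hsum : ∑ p : Grid m,
      (f p * lapH h g p + (Dx h f p * Dx h g p + Dy h f p * Dy h g p + Dz h f p * Dz h g p))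
      = 0 := by
    rw [Finset.sum_congr rfl (fun p _ => hpt p), ← Finset.sum_div]
    have hnum : ∑ p : Grid m,
        ((f p * g (p.1 - 1, p.2.1, p.2.2) - f (p.1 + 1, p.2.1, p.2.2) * g p)
        + (f (p.1 + 1, p.2.1, p.2.2) * g (p.1 + 1, p.2.1, p.2.2) - f p * g p)
        + (f p * g (p.1, p.2.1 - 1, p.2.2) - f (p.1, p.2.1 + 1, p.2.2) * g p)
        + (f (p.1, p.2.1 + 1, p.2.2) * g (p.1, p.2.1 + 1, p.2.2) - f p * g p)
        + (f p * g (p.1, p.2.1, p.2.2 - 1) - f (p.1, p.2.1, p.2.2 + 1) * g p)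
        + (f (p.1, p.2.1, p.2.2 + 1) * g (p.1, p.2.1, p.2.2 + 1) - f p * g p)) = 0 := by
      simp only [Finset.sum_add_distrib, Finset.sum_sub_distrib]
      linarith [hx1, hx2, hy1, hy2, hz1, hz2]
    rw [hnum, zero_div]
  have := hsum
  rw [Finset.sum_add_distrib] at this
  linarith

/-- Discrete interpolation inequality:
`‖Δ_h φ‖₂² ≤ (1/(3α²)) ‖φ‖₂² + (2α/3) ‖∇_h(Δ_h φ)‖₂²` for every `α > 0`. -/

theorem stmt3 (L : ℝ) (hL : 0 < L) (m : ℕ) [NeZero m] (h : ℝ) (hh : h = L / m)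
    (φ : Grid m → ℝ) (α : ℝ) (hα : 0 < α) :
    norm2sq h (lapH h φ) ≤
      1 / (3 * α ^ 2) * norm2sq h φ + (2 * α / 3) * gradsq h (lapH h φ) := by
  have hm : (0:ℝ) < m := by exact_mod_cast Nat.pos_of_ne_zero (NeZero.ne m)
  have hhp : 0 < h := by rw [hh]; exact div_pos hL hm
  have hne : h ≠ 0 := ne_of_gt hhp
  have h3 : (0:ℝ) < h ^ 3 := pow_pos hhp 3
  set ψ : Grid m → ℝ := lapH h φ with hψ
  set A : ℝ := norm2sq h φ with hA
  set B : ℝ := norm2sq h ψ with hB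
  set C : ℝ := gradsq h ψ with hC
  set G : ℝ := gradsq h φ with hG
  have hA0 : 0 ≤ A := mul_nonneg h3.le (Finset.sum_nonneg fun p _ => sq_nonneg _)
  have hB0 : 0 ≤ B := mul_nonneg h3.le (Finset.sum_nonneg fun p _ => sq_nonneg _)
  have hC0 : 0 ≤ C := mul_nonneg h3.le (Finset.sum_nonneg fun p _ => by positivity)
  have hG0 : 0 ≤ G := mul_nonneg h3.le (Finset.sum_nonneg fun p _ => by positivity)
  -- B = -(h^3 * ∑ ∇ψ·∇φ)
  have hBeq : B = -(h ^ 3 * ∑ p : Grid m,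
      (Dx h ψ p * Dx h φ p + Dy h ψ p * Dy h φ p + Dz h ψ p * Dz h φ p)) := by
    have : B = h ^ 3 * ∑ p : Grid m, ψ p * lapH h φ p := by
      rw [hB, norm2sq]
      congr 1
      exact Finset.sum_congr rfl fun p _ => by rw [← hψ, sq]
    rw [this, ibp_aux h hne ψ φ, mul_neg]
  -- G = -(h^3 * ∑ φ·ψ)
  have hGeq : G = -(h ^ 3 * ∑ p : Grid m, φ p * ψ p) := by
    have hibp := ibp_aux h hne φ φ
    rw [hG, gradsq]
    rw [show ∑ p : Grid m, (Dx h φ p ^ 2 + Dy h φ p ^ 2 + Dz h φ p ^ 2)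
        = ∑ p : Grid m, (Dx h φ p * Dx h φ p + Dy h φ p * Dy h φ p + Dz h φ p * Dz h φ p) from
      Finset.sum_congr rfl fun p _ => by ring]
    rw [show ∑ p : Grid m, (Dx h φ p * Dx h φ p + Dy h φ p * Dy h φ p + Dz h φ p * Dz h φ p)
        = -∑ p : Grid m, φ p * lapH h φ p from by linarith [hibp]]
    rw [← hψ]
    ring
  -- Cauchy-Schwarz: G^2 ≤ A * B
  have hG2 : G ^ 2 ≤ A * B := by
    have cs := Finset.sum_mul_sq_le_sq_mul_sq Finset.univ (fun p : Grid m => φ p) ψ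
    have hGsq : G ^ 2 = (h ^ 3) ^ 2 * (∑ p : Grid m, φ p * ψ p) ^ 2 := by
      rw [hGeq]; ring
    rw [hGsq, hA, hB, norm2sq, norm2sq]
    calc (h ^ 3) ^ 2 * (∑ p : Grid m, φ p * ψ p) ^ 2
        ≤ (h ^ 3) ^ 2 * ((∑ p : Grid m, φ p ^ 2) * ∑ p : Grid m, ψ p ^ 2) := by
          apply mul_le_mul_of_nonneg_left cs (by positivity)
      _ = (h ^ 3 * ∑ p : Grid m, φ p ^ 2) * (h ^ 3 * ∑ p : Grid m, ψ p ^ 2) := by ring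
  -- Cauchy-Schwarz on the gradients: B^2 ≤ C * G
  have hB2 : B ^ 2 ≤ C * G := by
    have cs : (∑ p : Grid m,
          (Dx h ψ p * Dx h φ p + Dy h ψ p * Dy h φ p + Dz h ψ p * Dz h φ p)) ^ 2
        ≤ (∑ p : Grid m, (Dx h ψ p ^ 2 + Dy h ψ p ^ 2 + Dz h ψ p ^ 2))
          * ∑ p : Grid m, (Dx h φ p ^ 2 + Dy h φ p ^ 2 + Dz h φ p ^ 2) := by
      have cs0 := Finset.sum_mul_sq_le_sq_mul_sq (Finset.univ : Finset (Grid m × Fin 3))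
        (fun q => ![Dx h ψ q.1, Dy h ψ q.1, Dz h ψ q.1] q.2)
        (fun q => ![Dx h φ q.1, Dy h φ q.1, Dz h φ q.1] q.2)
      simpa only [Fintype.sum_prod_type, Fin.sum_univ_three, Matrix.cons_val_zero,
        Matrix.cons_val_one, Matrix.head_cons, Matrix.cons_val_two, Matrix.tail_cons] using cs0
    have hBsq : B ^ 2 = (h ^ 3) ^ 2 * (∑ p : Grid m,
        (Dx h ψ p * Dx h φ p + Dy h ψ p * Dy h φ p + Dz h ψ p * Dz h φ p)) ^ 2 := by
      rw [hBeq]; ring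
    rw [hBsq, hC, hG, gradsq, gradsq]
    calc (h ^ 3) ^ 2 * (∑ p : Grid m,
          (Dx h ψ p * Dx h φ p + Dy h ψ p * Dy h φ p + Dz h ψ p * Dz h φ p)) ^ 2
        ≤ (h ^ 3) ^ 2 * ((∑ p : Grid m, (Dx h ψ p ^ 2 + Dy h ψ p ^ 2 + Dz h ψ p ^ 2))
            * ∑ p : Grid m, (Dx h φ p ^ 2 + Dy h φ p ^ 2 + Dz h φ p ^ 2)) := by
          exact mul_le_mul_of_nonneg_left cs (by positivity)
      _ = (h ^ 3 * ∑ p : Grid m, (Dx h ψ p ^ 2 + Dy h ψ p ^ 2 + Dz h ψ p ^ 2))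
            * (h ^ 3 * ∑ p : Grid m, (Dx h φ p ^ 2 + Dy h φ p ^ 2 + Dz h φ p ^ 2)) := by ring
  -- combine: B^3 ≤ A * C^2
  have hB3 : B ^ 3 ≤ A * C ^ 2 := by
    rcases eq_or_lt_of_le hB0 with hB0' | hB0'
    · rw [← hB0']; nlinarith [mul_nonneg hA0 (sq_nonneg C)]
    · have h4 : B ^ 4 ≤ A * B * C ^ 2 := by nlinarith [hB2, hG2, hC0, hG0, hA0, hB0]
      have hmul : B ^ 3 * B ≤ (A * C ^ 2) * B := by nlinarith [h4]
      exact le_of_mul_le_mul_right hmul hB0'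
  -- final AM-GM step
  set x : ℝ := A / α ^ 2 with hx
  set y : ℝ := α * C with hy
  have hx0 : 0 ≤ x := div_nonneg hA0 (sq_nonneg α)
  have hy0 : 0 ≤ y := mul_nonneg hα.le hC0
  have hα2 : α ^ 2 ≠ 0 := pow_ne_zero 2 hα.ne'
  have hxy : A * C ^ 2 = x * y ^ 2 := by
    rw [hx, hy, div_mul_eq_mul_div, eq_div_iff hα2]
    ring
  have hcube : 27 * (x * y ^ 2) ≤ (x + 2 * y) ^ 3 := by
    nlinarith [mul_nonneg (sq_nonneg (x - y)) (by linarith : (0:ℝ) ≤ x + 8 * y)]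
  have hBle : B ≤ (x + 2 * y) / 3 := by
    apply le_of_pow_le_pow_left₀ (n := 3) (by norm_num) (by positivity)
    calc B ^ 3 ≤ x * y ^ 2 := by rw [← hxy]; exact hB3
      _ ≤ ((x + 2 * y) / 3) ^ 3 := by nlinarith [hcube]
  have hfin : 1 / (3 * α ^ 2) * A + (2 * α / 3) * C = (x + 2 * y) / 3 := by
    rw [hx, hy]; ring
  linarith [hBle, hfin]
end

section
/- Coercivity of the discrete PFC energy: for every L > 0 and every ε with 0 < ε < 1, there exists a constant C > 0, depending only on L and ε (in particular independent of m and h), such that for every positive integer m (with h = L/m) and every periodic grid function φ : (ZMod m)³ → ℝ, F_h(φ) ≥ C ‖φ‖_{2,2}² − L³/4. -/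
open Finset Real

section Aux

variable {m : ℕ} [NeZero m]

lemma shiftX (f : Grid m → ℝ) :
    ∑ p : Grid m, f (p.1 + 1, p.2.1, p.2.2) = ∑ p : Grid m, f p :=
  Fintype.sum_equiv ((Equiv.addRight (1 : ZMod m)).prodCongr (Equiv.refl _)) _ _ (fun _ => rfl)

lemma shiftY (f : Grid m → ℝ) :
    ∑ p : Grid m, f (p.1, p.2.1 + 1, p.2.2) = ∑ p : Grid m, f p :=
  Fintype.sum_equiv ((Equiv.refl (ZMod m)).prodCongr
    ((Equiv.addRight (1 : ZMod m)).prodCongr (Equiv.refl _))) _ _ (fun _ => rfl)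

lemma shiftZ (f : Grid m → ℝ) :
    ∑ p : Grid m, f (p.1, p.2.1, p.2.2 + 1) = ∑ p : Grid m, f p :=
  Fintype.sum_equiv ((Equiv.refl (ZMod m)).prodCongr
    ((Equiv.refl (ZMod m)).prodCongr (Equiv.addRight (1 : ZMod m)))) _ _ (fun _ => rfl)

lemma sbp {h : ℝ} (hh : 0 < h) (φ : Grid m → ℝ) :
    gradsq h φ = - ip h φ (lapH h φ) := by
  have hne : h ≠ 0 := hh.ne'
  have cancel : ∀ p : Grid m,
      (Dx h φ p) ^ 2 + (Dy h φ p) ^ 2 + (Dz h φ p) ^ 2 + φ p * lapH h φ p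
        = ((φ (p.1 + 1, p.2.1, p.2.2)) ^ 2 - (φ p) ^ 2
          + ((φ (p.1, p.2.1 + 1, p.2.2)) ^ 2 - (φ p) ^ 2)
          + ((φ (p.1, p.2.1, p.2.2 + 1)) ^ 2 - (φ p) ^ 2)
          + (φ p * φ (p.1 - 1, p.2.1, p.2.2) - φ (p.1 + 1, p.2.1, p.2.2) * φ p)
          + (φ p * φ (p.1, p.2.1 - 1, p.2.2) - φ (p.1, p.2.1 + 1, p.2.2) * φ p)
          + (φ p * φ (p.1, p.2.1, p.2.2 - 1) - φ (p.1, p.2.1, p.2.2 + 1) * φ p)) / h ^ 2 := by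
    intro p
    unfold Dx Dy Dz lapH
    field_simp
    ring
  have T : ∑ p : Grid m,
      ((φ (p.1 + 1, p.2.1, p.2.2)) ^ 2 - (φ p) ^ 2
        + ((φ (p.1, p.2.1 + 1, p.2.2)) ^ 2 - (φ p) ^ 2)
        + ((φ (p.1, p.2.1, p.2.2 + 1)) ^ 2 - (φ p) ^ 2)
        + (φ p * φ (p.1 - 1, p.2.1, p.2.2) - φ (p.1 + 1, p.2.1, p.2.2) * φ p)
        + (φ p * φ (p.1, p.2.1 - 1, p.2.2) - φ (p.1, p.2.1 + 1, p.2.2) * φ p)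
        + (φ p * φ (p.1, p.2.1, p.2.2 - 1) - φ (p.1, p.2.1, p.2.2 + 1) * φ p)) = 0 := by
    have h1 := shiftX (fun p : Grid m => (φ p) ^ 2)
    have h2 := shiftY (fun p : Grid m => (φ p) ^ 2)
    have h3 := shiftZ (fun p : Grid m => (φ p) ^ 2)
    have h4 := shiftX (fun p : Grid m => φ p * φ (p.1 - 1, p.2.1, p.2.2))
    have h5 := shiftY (fun p : Grid m => φ p * φ (p.1, p.2.1 - 1, p.2.2))
    have h6 := shiftZ (fun p : Grid m => φ p * φ (p.1, p.2.1, p.2.2 - 1))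
    simp only [add_sub_cancel_right] at h1 h2 h3 h4 h5 h6
    simp only [Finset.sum_add_distrib, Finset.sum_sub_distrib]
    linarith
  have sum_eq : (∑ p : Grid m, ((Dx h φ p) ^ 2 + (Dy h φ p) ^ 2 + (Dz h φ p) ^ 2))
      + ∑ p : Grid m, φ p * lapH h φ p = 0 := by
    rw [← Finset.sum_add_distrib]
    calc (∑ p : Grid m, ((Dx h φ p) ^ 2 + (Dy h φ p) ^ 2 + (Dz h φ p) ^ 2 + φ p * lapH h φ p))
        = ∑ p : Grid m,
            ((φ (p.1 + 1, p.2.1, p.2.2)) ^ 2 - (φ p) ^ 2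
              + ((φ (p.1, p.2.1 + 1, p.2.2)) ^ 2 - (φ p) ^ 2)
              + ((φ (p.1, p.2.1, p.2.2 + 1)) ^ 2 - (φ p) ^ 2)
              + (φ p * φ (p.1 - 1, p.2.1, p.2.2) - φ (p.1 + 1, p.2.1, p.2.2) * φ p)
              + (φ p * φ (p.1, p.2.1 - 1, p.2.2) - φ (p.1, p.2.1 + 1, p.2.2) * φ p)
              + (φ p * φ (p.1, p.2.1, p.2.2 - 1) - φ (p.1, p.2.1, p.2.2 + 1) * φ p)) / h ^ 2 :=
          Finset.sum_congr rfl (fun p _ => cancel p)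
      _ = (∑ p : Grid m,
            ((φ (p.1 + 1, p.2.1, p.2.2)) ^ 2 - (φ p) ^ 2
              + ((φ (p.1, p.2.1 + 1, p.2.2)) ^ 2 - (φ p) ^ 2)
              + ((φ (p.1, p.2.1, p.2.2 + 1)) ^ 2 - (φ p) ^ 2)
              + (φ p * φ (p.1 - 1, p.2.1, p.2.2) - φ (p.1 + 1, p.2.1, p.2.2) * φ p)
              + (φ p * φ (p.1, p.2.1 - 1, p.2.2) - φ (p.1, p.2.1 + 1, p.2.2) * φ p)
              + (φ p * φ (p.1, p.2.1, p.2.2 - 1) - φ (p.1, p.2.1, p.2.2 + 1) * φ p))) / h ^ 2 := by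
          rw [Finset.sum_div]
      _ = 0 := by rw [T, zero_div]
  unfold gradsq ip
  have : (∑ p : Grid m, ((Dx h φ p) ^ 2 + (Dy h φ p) ^ 2 + (Dz h φ p) ^ 2))
      = - ∑ p : Grid m, φ p * lapH h φ p := by linarith
  rw [this]; ring

end Aux

/-- Coercivity of the discrete PFC energy: `F_h(φ) ≥ C ‖φ‖_{2,2}² - L³/4` with a constant `C`
depending only on `L` and `ε`. -/
theorem stmt4 (L : ℝ) (hL : 0 < L) (ε : ℝ) (hε : 0 < ε) (hε1 : ε < 1) :
    ∃ C : ℝ, 0 < C ∧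
      ∀ (m : ℕ) [NeZero m] (φ : Grid m → ℝ),
        Fh (L / m) ε φ ≥ C * h22sq (L / m) φ - L ^ 3 / 4 := by
  refine ⟨(1 - ε) / 16, by linarith, ?_⟩
  intro m _ φ
  set h : ℝ := L / m with hdef
  have hm : (0 : ℝ) < m := by
    exact_mod_cast Nat.pos_of_ne_zero (NeZero.ne m)
  have hh : 0 < h := div_pos hL hm
  have h3ε : (0 : ℝ) < 3 - ε := by linarith
  -- nonnegativity of the lap L² norm
  have hl : 0 ≤ norm2sq h (lapH h φ) := by
    unfold norm2sq
    exact mul_nonneg (pow_pos hh 3).le (Finset.sum_nonneg fun p _ => sq_nonneg _)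
  -- gradient bound via summation by parts
  have hgrad : gradsq h φ ≤ ((3 - ε) / 4) * norm2sq h φ
      + (1 / (3 - ε)) * norm2sq h (lapH h φ) := by
    rw [sbp hh φ]
    unfold ip norm2sq
    have pointwise : ∀ p : Grid m, -(φ p * lapH h φ p)
        ≤ ((3 - ε) / 4) * (φ p) ^ 2 + (1 / (3 - ε)) * (lapH h φ p) ^ 2 := by
      intro p
      have e : ((3 - ε) / 4) * (φ p) ^ 2 + (1 / (3 - ε)) * (lapH h φ p) ^ 2
          + φ p * lapH h φ p
          = ((3 - ε) / 2 * φ p + lapH h φ p) ^ 2 / (3 - ε) := by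
        field_simp
        ring
      have := div_nonneg (sq_nonneg ((3 - ε) / 2 * φ p + lapH h φ p)) h3ε.le
      linarith [e ▸ this]
    have S1 : ∑ p : Grid m, (-(φ p * lapH h φ p))
        ≤ ∑ p : Grid m, (((3 - ε) / 4) * (φ p) ^ 2 + (1 / (3 - ε)) * (lapH h φ p) ^ 2) :=
      Finset.sum_le_sum fun p _ => pointwise p
    rw [Finset.sum_neg_distrib, Finset.sum_add_distrib, ← Finset.mul_sum, ← Finset.mul_sum] at S1
    have := mul_le_mul_of_nonneg_left S1 (pow_pos hh 3).le
    nlinarith [this]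
  -- quartic bound
  have hcard : ((Fintype.card (Grid m) : ℝ)) = (m : ℝ) ^ 3 := by
    simp [Fintype.card_prod, ZMod.card]
    ring
  have hL3 : L ^ 3 / 4 = h ^ 3 * ∑ _p : Grid m, (1 / 4 : ℝ) := by
    rw [Finset.sum_const, Finset.card_univ, nsmul_eq_mul, hcard, hdef]
    field_simp
  have hc2 : -(1 / 2 : ℝ) ≤ (1 - ε) / 2 - (1 - ε) / 16 - (1 + (1 - ε) / 16) * ((3 - ε) / 4) := by
    nlinarith [mul_nonneg (by linarith : (0:ℝ) ≤ 1 - ε) (by linarith : (0:ℝ) ≤ 9 + ε)]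
  have hquart : 0 ≤ (1 / 4) * norm4p4 h φ
      + ((1 - ε) / 2 - (1 - ε) / 16 - (1 + (1 - ε) / 16) * ((3 - ε) / 4)) * norm2sq h φ
      + L ^ 3 / 4 := by
    have key : (1 / 4) * norm4p4 h φ
        + ((1 - ε) / 2 - (1 - ε) / 16 - (1 + (1 - ε) / 16) * ((3 - ε) / 4)) * norm2sq h φ
        + L ^ 3 / 4
        = h ^ 3 * ∑ p : Grid m, ((1 / 4) * (φ p) ^ 4
            + ((1 - ε) / 2 - (1 - ε) / 16 - (1 + (1 - ε) / 16) * ((3 - ε) / 4)) * (φ p) ^ 2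
            + 1 / 4) := by
      unfold norm4p4 norm2sq
      rw [hL3]
      simp only [Finset.sum_add_distrib, ← Finset.mul_sum]
      ring
    rw [key]
    refine mul_nonneg (pow_pos hh 3).le (Finset.sum_nonneg fun p _ => ?_)
    nlinarith [sq_nonneg ((φ p) ^ 2 - 1), sq_nonneg (φ p), hc2,
      mul_nonneg (by linarith : (0:ℝ) ≤ ((1 - ε) / 2 - (1 - ε) / 16
        - (1 + (1 - ε) / 16) * ((3 - ε) / 4)) + 1 / 2) (sq_nonneg (φ p))]
  -- coefficient of the Laplacian term
  have hc4 : 0 ≤ 1 / 2 - (1 - ε) / 16 - (1 + (1 - ε) / 16) * (1 / (3 - ε)) := by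
    rw [mul_one_div, sub_nonneg, div_le_iff₀ h3ε]
    nlinarith [mul_nonneg (by linarith : (0:ℝ) ≤ 1 - ε) (by linarith : (0:ℝ) ≤ 4 + ε)]
  have hc4l : 0 ≤ (1 / 2 - (1 - ε) / 16 - (1 + (1 - ε) / 16) * (1 / (3 - ε)))
      * norm2sq h (lapH h φ) := mul_nonneg hc4 hl
  have hgrad2 : (1 + (1 - ε) / 16) * gradsq h φ
      ≤ (1 + (1 - ε) / 16) * (((3 - ε) / 4) * norm2sq h φ
        + (1 / (3 - ε)) * norm2sq h (lapH h φ)) :=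
    mul_le_mul_of_nonneg_left hgrad (by linarith)
  unfold Fh h22sq
  linarith [hquart, hgrad2, hc4l]
end

section
/- Unique solvability of the second-order PFC scheme: for every L > 0, positive integer m (with h = L/m), every 0 < ε < 1, every τ > 0, and every pair of periodic grid functions φᵃ, φᵇ : (ZMod m)³ → ℝ, there exists a unique periodic grid function φᶜ such that (φᵃ, φᵇ, φᶜ) satisfies one step of the second-order scheme. -/
open Finset Real

/-!
Write the unknown as `c = b + τ Δ_h ψ`. The chemical potential `μ(c)` is the gradient in `c` of
`muPotential` (a quartic in each grid value plus `¼‖Δ_h(c + b)‖²`), so one step of the scheme,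
`Δ_h ψ = Δ_h μ(c)`, is the Euler–Lagrange equation of
`ψ ↦ muPotential (b + τ Δ_h ψ) + (τ/2)‖∇_h ψ‖²`. This functional only depends on `ψ` up to
constants and is bounded below by `(τ/2)‖∇_h ψ‖² - C`, which is coercive on mean-zero grid
functions because `∇_h` is injective there; a minimiser exists and yields a solution.

For uniqueness, the difference `w` of two solutions satisfies `w = τ Δ_h D` with
`D = μ(c₁) - μ(c₂)`, so `⟨w, D⟩ = τ ⟨Δ_h D, D⟩ ≤ 0`, whereas the monotonicity of the cubic
nonlinearity and the positivity of `⟨w, Δ_h² w⟩` give `⟨w, D⟩ ≥ (1 - ε)/2 ‖w‖²`.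
-/

open Filter

theorem dotProduct_self_nonneg {ι : Type*} [Fintype ι] (v : ι → ℝ) : 0 ≤ v ⬝ᵥ v :=
  Fintype.sum_nonneg fun i => mul_self_nonneg (v i)

theorem sum_sub_mul_sub_eq_neg_sum {G : Type*} [AddGroup G] [Fintype G] (e : G) (f g : G → ℝ) :
    ∑ p, (f (p + e) - f p) * (g (p + e) - g p)
      = -∑ p, (f (p + e) + f (p - e) - 2 * f p) * g p := by
  have shift : ∑ p, f (p + e) * g (p + e) = ∑ p, f p * g p :=
    Equiv.sum_comp (Equiv.addRight e) fun p => f p * g p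
  have back : ∑ p, f (p - e) * g p = ∑ p, f p * g (p + e) := by
    rw [← Equiv.sum_comp (Equiv.addRight e)]
    simp
  have lhs : ∑ p, (f (p + e) - f p) * (g (p + e) - g p)
      = ∑ p, f (p + e) * g (p + e) - ∑ p, f (p + e) * g p - ∑ p, f p * g (p + e)
        + ∑ p, f p * g p := by
    simp only [← Finset.sum_sub_distrib, ← Finset.sum_add_distrib]
    exact Finset.sum_congr rfl fun p _ => by ring
  have rhs : ∑ p, (f (p + e) + f (p - e) - 2 * f p) * g p
      = ∑ p, f (p + e) * g p + ∑ p, f (p - e) * g p - 2 * ∑ p, f p * g p := by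
    simp only [Finset.mul_sum, ← Finset.sum_sub_distrib, ← Finset.sum_add_distrib]
    exact Finset.sum_congr rfl fun p _ => by ring
  linarith

theorem hasDerivAt_sum_comp_add_mul {ι : Type*} [Fintype ι] {Φ φ : ι → ℝ → ℝ}
    (hΦ : ∀ i x, HasDerivAt (Φ i) (φ i x) x) (x y : ι → ℝ) :
    HasDerivAt (fun t => ∑ i, Φ i (x i + t * y i)) (∑ i, φ i (x i) * y i) 0 := by
  refine HasDerivAt.fun_sum fun i _ => ?_
  have hline : HasDerivAt (fun t : ℝ => x i + t * y i) (y i) 0 := by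
    simpa using ((hasDerivAt_id (0 : ℝ)).mul_const (y i)).const_add (x i)
  have hcomp := (hΦ i (x i + 0 * y i)).comp (0 : ℝ) hline
  rw [zero_mul, add_zero] at hcomp
  exact hcomp

theorem hasDerivAt_dotProduct_self_add_smul {ι : Type*} [Fintype ι] (u w : ι → ℝ) :
    HasDerivAt (fun t : ℝ => (u + t • w) ⬝ᵥ (u + t • w)) (2 * (u ⬝ᵥ w)) 0 := by
  have := hasDerivAt_sum_comp_add_mul (Φ := fun _ x => x ^ 2) (φ := fun _ x => 2 * x)
    (fun _ x => by simpa using hasDerivAt_pow 2 x) u w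
  simpa [dotProduct, Finset.mul_sum, mul_assoc, sq] using this

theorem tendsto_dotProduct_self_cocompact {E : Type*} [NormedAddCommGroup E] [NormedSpace ℝ E]
    [FiniteDimensional ℝ E] {ι : Type*} [Fintype ι] {A : E →ₗ[ℝ] ι → ℝ}
    (hA : Function.Injective A) : Tendsto (fun x => A x ⬝ᵥ A x) (cocompact E) atTop := by
  have hA' := LinearMap.isClosedEmbedding_of_injective (LinearMap.ker_eq_bot.2 hA)
  refine Tendsto.comp (g := fun y => y ⬝ᵥ y) ?_ hA'.tendsto_cocompact
  refine tendsto_atTop_mono (fun y => ?_)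
    ((tendsto_pow_atTop two_ne_zero).comp tendsto_norm_cocompact_atTop)
  have hcoord : ∀ i, y i ^ 2 ≤ y ⬝ᵥ y := fun i => by
    simpa [dotProduct, sq] using
      Finset.single_le_sum (fun j _ => mul_self_nonneg (y j)) (Finset.mem_univ i)
  have hnorm : ‖y‖ ≤ √(y ⬝ᵥ y) := (pi_norm_le_iff_of_nonneg (Real.sqrt_nonneg _)).2 fun i =>
    (Real.norm_eq_abs _).trans_le (Real.abs_le_sqrt (hcoord i))
  exact (Real.le_sqrt (norm_nonneg _) (dotProduct_self_nonneg y)).1 hnorm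

-- Three AM–GM steps absorb `B x³`, `G x²` and `D x` into `x⁴ / 16`.
theorem exists_le_quartic (B G D : ℝ) :
    ∃ C, ∀ x : ℝ, C ≤ x ^ 4 / 16 + B * x ^ 3 + G * x ^ 2 + D * x :=
  ⟨-(16 * (|G| + 16 * B ^ 2) ^ 2 + 16 + D ^ 2 / 4), fun x => by
    nlinarith [sq_nonneg (x ^ 2 / 8 + 4 * B * x), sq_nonneg (x ^ 2 / 8 - 4 * (|G| + 16 * B ^ 2)),
      sq_nonneg (x + D / 2), sq_nonneg (x ^ 2 / 8 - 4), mul_nonneg (abs_nonneg G) (sq_nonneg x),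
      neg_abs_le G, sq_nonneg x, sq_nonneg B]⟩

variable {m : ℕ}

def unitVec : Fin 3 → Grid m := ![(1, 0, 0), (0, 1, 0), (0, 0, 1)]

theorem lapH_eq_sum (h : ℝ) (f : Grid m → ℝ) (p : Grid m) :
    lapH h f p = (∑ i, (f (p + unitVec i) + f (p - unitVec i) - 2 * f p)) / h ^ 2 := by
  obtain ⟨x, y, z⟩ := p
  simp [lapH, Fin.sum_univ_three, unitVec]
  ring

theorem lapH_add (h : ℝ) (f g : Grid m → ℝ) : lapH h (f + g) = lapH h f + lapH h g := by
  ext p; simp only [lapH, Pi.add_apply]; ring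

theorem lapH_sub (h : ℝ) (f g : Grid m → ℝ) : lapH h (f - g) = lapH h f - lapH h g := by
  ext p; simp only [lapH, Pi.sub_apply]; ring

theorem lapH_smul (h t : ℝ) (f : Grid m → ℝ) : lapH h (t • f) = t • lapH h f := by
  ext p; simp only [lapH, Pi.smul_apply, smul_eq_mul]; ring

theorem lapH_const (h k : ℝ) : lapH h (fun _ : Grid m => k) = 0 := by
  ext p; simp only [lapH, Pi.zero_apply]; ring

theorem continuous_lapH (h : ℝ) : Continuous (lapH (m := m) h) :=
  continuous_pi fun p => by unfold lapH; fun_prop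

noncomputable def grad (h : ℝ) : (Grid m → ℝ) →ₗ[ℝ] Fin 3 × Grid m → ℝ where
  toFun f j := (f (j.2 + unitVec j.1) - f j.2) / h
  map_add' f g := by ext j; simp only [Pi.add_apply]; ring
  map_smul' t f := by ext j; simp only [Pi.smul_apply, smul_eq_mul, RingHom.id_apply]; ring

theorem grad_apply (h : ℝ) (f : Grid m → ℝ) (j : Fin 3 × Grid m) :
    grad h f j = (f (j.2 + unitVec j.1) - f j.2) / h := rfl

theorem grad_const (h k : ℝ) : grad h (fun _ : Grid m => k) = 0 := by
  ext j; simp [grad_apply]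

noncomputable def localForce (ε β x : ℝ) : ℝ :=
  (1 / 2) * (x + β) * ((1 / 2) * (x ^ 2 + β ^ 2)) + (1 - ε) * ((1 / 2) * (x + β))

noncomputable def localPotential (ε β x : ℝ) : ℝ :=
  x ^ 4 / 16 + β * x ^ 3 / 12 + β ^ 2 * x ^ 2 / 8 + β ^ 3 * x / 4
    + (1 - ε) * (x ^ 2 / 4 + β * x / 2)

theorem hasDerivAt_localPotential (ε β x : ℝ) :
    HasDerivAt (localPotential ε β) (localForce ε β x) x := by
  have hx := hasDerivAt_id' x
  have hpoly := ((((hx.pow 4).div_const 16).add (((hx.pow 3).const_mul β).div_const 12)).add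
    (((hx.pow 2).const_mul (β ^ 2)).div_const 8)).add ((hx.const_mul (β ^ 3)).div_const 4) |>.add
    ((((hx.pow 2).div_const 4).add ((hx.const_mul β).div_const 2)).const_mul (1 - ε))
  refine hpoly.congr_deriv ?_
  simp only [localForce]
  push_cast
  ring

theorem sq_sub_le_mul_localForce_sub (ε β x y : ℝ) :
    (1 - ε) / 2 * (x - y) ^ 2 ≤ (x - y) * (localForce ε β x - localForce ε β y) := by
  unfold localForce
  nlinarith [sq_nonneg ((x - y) * (x + β)), sq_nonneg ((x - y) * (y + β)),
    sq_nonneg ((x - y) * (x + y))]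

theorem mu_eq (h ε : ℝ) (a b c : Grid m → ℝ) :
    mu h ε a b c = (fun p => localForce ε (b p) (c p) + (3 * lapH h b p - lapH h a p))
      + lapH h ((1 / 2 : ℝ) • lapH h (c + b)) := by
  have hhalf : (fun q => (1 / 2) * lapH h (fun r => c r + b r) q)
      = (1 / 2 : ℝ) • lapH h (c + b) := rfl
  ext p
  simp only [mu, hhalf, localForce, Pi.add_apply]
  ring

theorem mu_sub_mu (h ε : ℝ) (a b c₁ c₂ : Grid m → ℝ) :
    mu h ε a b c₁ - mu h ε a b c₂
      = (fun p => localForce ε (b p) (c₁ p) - localForce ε (b p) (c₂ p))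
        + lapH h ((1 / 2 : ℝ) • lapH h (c₁ - c₂)) := by
  have hdiff : c₁ - c₂ = (c₁ + b) - (c₂ + b) := by abel
  rw [mu_eq, mu_eq, hdiff, lapH_sub, smul_sub, lapH_sub]
  ext p
  simp only [Pi.add_apply, Pi.sub_apply]
  ring

def meanZero (m : ℕ) [NeZero m] : Submodule ℝ (Grid m → ℝ) where
  carrier := {ψ | ∑ p, ψ p = 0}
  add_mem' {f g} hf hg := by simp_all [Finset.sum_add_distrib]
  zero_mem' := by simp
  smul_mem' t f hf := by simp_all [← Finset.mul_sum]

section Periodic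

variable [NeZero m]

theorem grad_dotProduct_grad (h : ℝ) (f g : Grid m → ℝ) :
    grad h f ⬝ᵥ grad h g = -(lapH h f ⬝ᵥ g) := by
  have lhs : grad h f ⬝ᵥ grad h g
      = (∑ i, ∑ p, (f (p + unitVec i) - f p) * (g (p + unitVec i) - g p)) / h ^ 2 := by
    rw [dotProduct, Fintype.sum_prod_type, Finset.sum_div]
    simp only [grad_apply, Finset.sum_div]
    exact Finset.sum_congr rfl fun i _ => Finset.sum_congr rfl fun p _ => by ring
  have rhs : lapH h f ⬝ᵥ g
      = (∑ i, ∑ p, (f (p + unitVec i) + f (p - unitVec i) - 2 * f p) * g p) / h ^ 2 := by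
    simp only [dotProduct, lapH_eq_sum, Finset.sum_div, Finset.sum_mul]
    rw [Finset.sum_comm]
    exact Finset.sum_congr rfl fun i _ => Finset.sum_congr rfl fun p _ => by ring
  simp only [lhs, rhs, sum_sub_mul_sub_eq_neg_sum, Finset.sum_neg_distrib, neg_div]

theorem lapH_dotProduct (h : ℝ) (f g : Grid m → ℝ) : lapH h f ⬝ᵥ g = f ⬝ᵥ lapH h g := by
  have hfg := grad_dotProduct_grad h f g
  have hgf := grad_dotProduct_grad h g f
  rw [dotProduct_comm (grad h g)] at hgf
  rw [dotProduct_comm f]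
  linarith

theorem lapH_dotProduct_self_nonpos (h : ℝ) (f : Grid m → ℝ) : lapH h f ⬝ᵥ f ≤ 0 := by
  have hgrad := grad_dotProduct_grad h f f
  have hnonneg := dotProduct_self_nonneg (grad h f)
  linarith

theorem eq_zero_of_grad_eq_zero {h : ℝ} (hh : h ≠ 0) {ψ : Grid m → ℝ} (hgrad : grad h ψ = 0)
    (hmean : ψ ∈ meanZero m) : ψ = 0 := by
  have hper : ∀ i, Function.Periodic ψ (unitVec i) := fun i p => by
    have := congr_fun hgrad (i, p)
    rw [grad_apply, Pi.zero_apply, div_eq_zero_iff, sub_eq_zero] at this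
    exact this.resolve_right hh
  have hconst : ∀ p, ψ p = ψ 0 := fun p => by
    have hp : p = 0 + p.1.val • unitVec 0 + p.2.1.val • unitVec 1 + p.2.2.val • unitVec 2 := by
      ext <;> simp [unitVec]
    rw [hp, (hper 2).nsmul, (hper 1).nsmul, (hper 0).nsmul]
  have h0 : ψ 0 = 0 := by
    have hsum : ∑ p, ψ p = 0 := hmean
    simp only [hconst _, Finset.sum_const, Finset.card_univ, nsmul_eq_mul, mul_eq_zero,
      Nat.cast_eq_zero, Fintype.card_ne_zero, false_or] at hsum
    exact hsum
  ext p
  rw [hconst p, h0, Pi.zero_apply]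

end Periodic

section Scheme

variable [NeZero m] (h τ ε : ℝ) (a b : Grid m → ℝ)

theorem schemeStep_unique (hτ : 0 < τ) (hε : ε < 1) {c₁ c₂ : Grid m → ℝ}
    (H₁ : SchemeStep h τ ε a b c₁) (H₂ : SchemeStep h τ ε a b c₂) : c₁ = c₂ := by
  set w := c₁ - c₂
  set D := mu h ε a b c₁ - mu h ε a b c₂ with hD
  have hw : w = τ • lapH h D := by
    ext p
    have e₁ := H₁ p
    have e₂ := H₂ p
    rw [div_eq_iff hτ.ne'] at e₁ e₂
    simp only [w, D, lapH_sub, Pi.sub_apply, Pi.smul_apply, smul_eq_mul]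
    linarith
  have upper : w ⬝ᵥ D ≤ 0 := by
    rw [hw, smul_dotProduct, smul_eq_mul]
    exact mul_nonpos_of_nonneg_of_nonpos hτ.le (lapH_dotProduct_self_nonpos h D)
  have lower : (1 - ε) / 2 * (w ⬝ᵥ w) ≤ w ⬝ᵥ D := by
    have hlocal : (1 - ε) / 2 * (w ⬝ᵥ w)
        ≤ w ⬝ᵥ fun p => localForce ε (b p) (c₁ p) - localForce ε (b p) (c₂ p) := by
      simp only [dotProduct, Finset.mul_sum, ← sq]
      exact Finset.sum_le_sum fun p _ => sq_sub_le_mul_localForce_sub ε (b p) (c₁ p) (c₂ p)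
    have hbiharmonic : w ⬝ᵥ lapH h ((1 / 2 : ℝ) • lapH h w) = 1 / 2 * (lapH h w ⬝ᵥ lapH h w) := by
      rw [← lapH_dotProduct, dotProduct_smul, smul_eq_mul]
    rw [hD, mu_sub_mu, dotProduct_add, hbiharmonic]
    nlinarith [dotProduct_self_nonneg (lapH h w)]
  have hw0 : w ⬝ᵥ w = 0 :=
    le_antisymm (by nlinarith [dotProduct_self_nonneg w]) (dotProduct_self_nonneg w)
  exact sub_eq_zero.1 (dotProduct_self_eq_zero.1 hw0)

noncomputable def muPotential (c : Grid m → ℝ) : ℝ :=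
  ∑ p, (localPotential ε (b p) (c p) + (3 * lapH h b p - lapH h a p) * c p)
    + (1 / 4) * (lapH h (c + b) ⬝ᵥ lapH h (c + b))

theorem hasDerivAt_muPotential (c y : Grid m → ℝ) :
    HasDerivAt (fun t : ℝ => muPotential h ε a b (c + t • y)) (mu h ε a b c ⬝ᵥ y) 0 := by
  have hΦ : ∀ p x,
      HasDerivAt (fun x => localPotential ε (b p) x + (3 * lapH h b p - lapH h a p) * x)
        (localForce ε (b p) x + (3 * lapH h b p - lapH h a p)) x := fun p x =>
    ((hasDerivAt_localPotential ε (b p) x).add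
      ((hasDerivAt_id' x).const_mul (3 * lapH h b p - lapH h a p))).congr_deriv (by ring)
  have hloc := hasDerivAt_sum_comp_add_mul hΦ c y
  have hquad := hasDerivAt_dotProduct_self_add_smul (lapH h (c + b)) (lapH h y)
  have hfun : (fun t : ℝ => muPotential h ε a b (c + t • y)) = fun t =>
      ∑ p, (localPotential ε (b p) (c p + t * y p)
          + (3 * lapH h b p - lapH h a p) * (c p + t * y p))
        + 1 / 4 * ((lapH h (c + b) + t • lapH h y) ⬝ᵥ (lapH h (c + b) + t • lapH h y)) := by
    ext t
    have hline : c + t • y + b = c + b + t • y := by abel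
    simp only [muPotential, hline, lapH_add, lapH_smul, Pi.add_apply, Pi.smul_apply, smul_eq_mul]
  have hval : mu h ε a b c ⬝ᵥ y
      = ∑ p, (localForce ε (b p) (c p) + (3 * lapH h b p - lapH h a p)) * y p
        + 1 / 4 * (2 * (lapH h (c + b) ⬝ᵥ lapH h y)) := by
    rw [mu_eq, add_dotProduct, lapH_dotProduct, smul_dotProduct, dotProduct]
    simp only [smul_eq_mul]
    ring
  rw [hfun, hval]
  exact hloc.add (hquad.const_mul (1 / 4))

theorem exists_le_muPotential : ∃ C, ∀ c, C ≤ muPotential h ε a b c := by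
  have hquartic : ∀ p, ∃ C, ∀ x,
      C ≤ localPotential ε (b p) x + (3 * lapH h b p - lapH h a p) * x := fun p => by
    obtain ⟨C, hC⟩ := exists_le_quartic (b p / 12) (b p ^ 2 / 8 + (1 - ε) / 4)
      (b p ^ 3 / 4 + (1 - ε) * b p / 2 + (3 * lapH h b p - lapH h a p))
    exact ⟨C, fun x => (hC x).trans_eq (by unfold localPotential; ring)⟩
  choose C hC using hquartic
  refine ⟨∑ p, C p, fun c => ?_⟩
  have hlocal := Finset.sum_le_sum fun p (_ : p ∈ Finset.univ) => hC p (c p)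
  have hquad := dotProduct_self_nonneg (lapH h (c + b))
  unfold muPotential
  linarith

noncomputable def stepFunctional (ψ : Grid m → ℝ) : ℝ :=
  muPotential h ε a b (b + τ • lapH h ψ) + τ / 2 * (grad h ψ ⬝ᵥ grad h ψ)

theorem hasDerivAt_stepFunctional (ψ v : Grid m → ℝ) :
    HasDerivAt (fun t : ℝ => stepFunctional h τ ε a b (ψ + t • v))
      (τ * ((lapH h (mu h ε a b (b + τ • lapH h ψ)) - lapH h ψ) ⬝ᵥ v)) 0 := by
  have hμ := hasDerivAt_muPotential h ε a b (b + τ • lapH h ψ) (τ • lapH h v)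
  have hgrad := hasDerivAt_dotProduct_self_add_smul (grad h ψ) (grad h v)
  have hfun : (fun t : ℝ => stepFunctional h τ ε a b (ψ + t • v)) = fun t =>
      muPotential h ε a b (b + τ • lapH h ψ + t • τ • lapH h v)
        + τ / 2 * ((grad h ψ + t • grad h v) ⬝ᵥ (grad h ψ + t • grad h v)) := by
    ext t
    simp only [stepFunctional, lapH_add, lapH_smul, map_add, map_smul, smul_add, add_assoc,
      smul_comm τ t]
  have hval : τ * ((lapH h (mu h ε a b (b + τ • lapH h ψ)) - lapH h ψ) ⬝ᵥ v)
      = mu h ε a b (b + τ • lapH h ψ) ⬝ᵥ τ • lapH h v + τ / 2 * (2 * (grad h ψ ⬝ᵥ grad h v)) := by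
    rw [dotProduct_smul, ← lapH_dotProduct, grad_dotProduct_grad, sub_dotProduct, smul_eq_mul]
    ring
  rw [hfun, hval]
  exact hμ.add (hgrad.const_mul (τ / 2))

theorem continuous_stepFunctional : Continuous (stepFunctional h τ ε a b) := by
  have hlap := continuous_lapH (m := m) h
  have hgrad := (grad (m := m) h).continuous_of_finiteDimensional
  unfold stepFunctional muPotential localPotential dotProduct
  fun_prop

theorem stepFunctional_sub_const (ψ : Grid m → ℝ) (k : ℝ) :
    stepFunctional h τ ε a b (ψ - fun _ => k) = stepFunctional h τ ε a b ψ := by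
  simp only [stepFunctional, lapH_sub, lapH_const, map_sub, grad_const, sub_zero]

theorem lapH_mu_eq_of_forall_le (hτ : τ ≠ 0) {ψ : Grid m → ℝ}
    (hmin : ∀ φ, stepFunctional h τ ε a b ψ ≤ stepFunctional h τ ε a b φ) :
    lapH h (mu h ε a b (b + τ • lapH h ψ)) = lapH h ψ := by
  set r := lapH h (mu h ε a b (b + τ • lapH h ψ)) - lapH h ψ
  have hlocal : IsLocalMin (fun t : ℝ => stepFunctional h τ ε a b (ψ + t • r)) 0 :=
    Filter.Eventually.of_forall fun t => by simpa using hmin (ψ + t • r)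
  have hcrit := hlocal.hasDerivAt_eq_zero (hasDerivAt_stepFunctional h τ ε a b ψ r)
  exact sub_eq_zero.1 (dotProduct_self_eq_zero.1 ((mul_eq_zero.1 hcrit).resolve_left hτ))

theorem exists_forall_stepFunctional_le (hh : h ≠ 0) (hτ : 0 < τ) :
    ∃ ψ, ∀ φ, stepFunctional h τ ε a b ψ ≤ stepFunctional h τ ε a b φ := by
  obtain ⟨C, hC⟩ := exists_le_muPotential h ε a b
  have hinj : Function.Injective ((grad h).comp (meanZero m).subtype) :=
    (injective_iff_map_eq_zero _).2 fun ψ hψ => Subtype.ext (eq_zero_of_grad_eq_zero hh hψ ψ.2)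
  have hcoercive : Tendsto (fun ψ : meanZero m => stepFunctional h τ ε a b ψ) (cocompact _) atTop :=
    tendsto_atTop_mono (fun ψ => by
        simp only [stepFunctional, LinearMap.comp_apply, Submodule.subtype_apply]
        linarith [hC (b + τ • lapH h ψ)])
      (tendsto_atTop_add_const_right _ C
        ((tendsto_dotProduct_self_cocompact hinj).const_mul_atTop (half_pos hτ)))
  obtain ⟨ψ₀, hψ₀⟩ :=
    ((continuous_stepFunctional h τ ε a b).comp continuous_subtype_val).exists_forall_le hcoercive
  refine ⟨ψ₀, fun φ => ?_⟩
  set k := (∑ p, φ p) / Fintype.card (Grid m)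
  have hmem : φ - (fun _ => k) ∈ meanZero m := by
    show ∑ p, (φ p - k) = 0
    rw [Finset.sum_sub_distrib, Finset.sum_const, Finset.card_univ, nsmul_eq_mul,
      mul_div_cancel₀ _ (Nat.cast_ne_zero.2 Fintype.card_ne_zero), sub_self]
  calc stepFunctional h τ ε a b ψ₀ ≤ stepFunctional h τ ε a b (φ - fun _ => k) := hψ₀ ⟨_, hmem⟩
    _ = stepFunctional h τ ε a b φ := stepFunctional_sub_const h τ ε a b φ k

theorem exists_schemeStep (hh : h ≠ 0) (hτ : 0 < τ) : ∃ c, SchemeStep h τ ε a b c := by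
  obtain ⟨ψ, hψ⟩ := exists_forall_stepFunctional_le h τ ε a b hh hτ
  refine ⟨b + τ • lapH h ψ, fun p => ?_⟩
  rw [lapH_mu_eq_of_forall_le h τ ε a b hτ.ne' hψ]
  simp only [Pi.add_apply, Pi.smul_apply, smul_eq_mul, add_sub_cancel_left]
  field_simp

end Scheme

theorem stmt5_general (L : ℝ) (hL : 0 < L) (m : ℕ) [NeZero m] (h : ℝ) (hh : h = L / m)
    (ε : ℝ) (hε1 : ε < 1) (τ : ℝ) (hτ : 0 < τ)
    (φa φb : Grid m → ℝ) :
    ∃! φc : Grid m → ℝ, SchemeStep h τ ε φa φb φc := by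
  have hh₀ : h ≠ 0 := by
    rw [hh]
    exact div_ne_zero hL.ne' (Nat.cast_ne_zero.2 (NeZero.ne m))
  obtain ⟨c, hc⟩ := exists_schemeStep h τ ε φa φb hh₀ hτ
  exact ⟨c, hc, fun c' hc' => schemeStep_unique h τ ε φa φb hτ hε1 hc' hc⟩

/-- Unique solvability of the second-order PFC scheme. -/
theorem stmt5 (L : ℝ) (hL : 0 < L) (m : ℕ) [NeZero m] (h : ℝ) (hh : h = L / m)
    (ε : ℝ) (hε : 0 < ε) (hε1 : ε < 1) (τ : ℝ) (hτ : 0 < τ)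
    (φa φb : Grid m → ℝ) :
    ∃! φc : Grid m → ℝ, SchemeStep h τ ε φa φb φc :=
  stmt5_general L hL m h hh ε hε1 τ hτ φa φb
end

section
/- Three-dimensional discrete Sobolev inequality: for every L > 0 there exists a constant C > 0, depending only on L (in particular independent of m and h), such that for every odd positive integer m (with h = L/m) and every periodic grid function φ : (ZMod m)³ → ℝ, ‖φ‖_∞ ≤ C ‖φ‖_{2,2}. -/
open Finset Real

/-!
Expand `φ` in the characters `ψ` of `(ZMod m)³`. Fourier inversion gives `m³ |φ p| ≤ ∑_ψ |φ̂ ψ|`,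
and Cauchy–Schwarz with the weights `(1 + λ_ψ)²`, where `λ_ψ ≥ 0` is the eigenvalue of `-Δ_h`
at `ψ`, bounds the square of this by `(∑_ψ (1 + λ_ψ)⁻²) · (∑_ψ (1 + λ_ψ)² |φ̂ ψ|²)`; by Parseval
the second factor is at most `2 m³ h⁻³ ‖φ‖²_{2,2}`. Writing the frequency of `ψ` as `a ∈ ℤ³`
with `|aᵢ| ≤ m / 2`, the bound `|sin x| ≥ 2|x|/π` gives `λ_ψ ≥ 16 |a|² / L²`, hence
`(1 + λ_ψ)⁻² ≲ (1 + |a|²)⁻² ≤ ∏ᵢ (1 + aᵢ²)^(-2/3)`, and the first factor is bounded, uniformly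
in `m`, by the cube of the convergent series `∑_{n ∈ ℤ} (1 + n²)^(-2/3)`. As `m³ h³ = L³`, the
resulting constant depends on `L` only.
-/

theorem AddChar.apply_add_apply_neg {G : Type*} [AddCommGroup G] [Finite G] (ψ : AddChar G ℂ)
    (s : G) : ψ s + ψ (-s) = 2 - (‖1 - ψ s‖ ^ 2 : ℝ) := by
  rw [AddChar.map_neg_eq_conj, Complex.add_conj, ← Complex.normSq_eq_norm_sq, Complex.normSq_sub,
    Complex.normSq_eq_norm_sq (ψ s), ψ.norm_apply]
  simp only [map_one, one_mul, Complex.conj_re]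
  push_cast
  ring

namespace DiscreteSobolev

section FourierAnalysis

variable {G : Type*} [AddCommGroup G] [Fintype G]

noncomputable def fourierCoeff (f : G → ℂ) (ψ : AddChar G ℂ) : ℂ :=
  ∑ x, f x * ψ (-x)

theorem sum_fourierCoeff_mul_apply (f : G → ℂ) (x : G) :
    ∑ ψ, fourierCoeff f ψ * ψ x = Fintype.card G * f x := by
  classical
  calc ∑ ψ, fourierCoeff f ψ * ψ x
      = ∑ y, f y * ∑ ψ : AddChar G ℂ, ψ (x - y) := by
        simp_rw [fourierCoeff, Finset.sum_mul, Finset.mul_sum, sub_eq_add_neg,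
          AddChar.map_add_eq_mul]
        rw [Finset.sum_comm]
        exact Finset.sum_congr rfl fun _ _ => Finset.sum_congr rfl fun _ _ => by ring
    _ = Fintype.card G * f x := by
        simp [AddChar.sum_apply_eq_ite, sub_eq_zero, mul_comm]

theorem sum_sq_norm_fourierCoeff (f : G → ℂ) :
    ∑ ψ, ‖fourierCoeff f ψ‖ ^ 2 = Fintype.card G * ∑ x, ‖f x‖ ^ 2 := by
  have key : ∑ ψ, fourierCoeff f ψ * starRingEnd ℂ (fourierCoeff f ψ)
      = Fintype.card G * ∑ x, f x * starRingEnd ℂ (f x) := by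
    calc ∑ ψ, fourierCoeff f ψ * starRingEnd ℂ (fourierCoeff f ψ)
        = ∑ x, starRingEnd ℂ (f x) * ∑ ψ, fourierCoeff f ψ * ψ x := by
          simp_rw [fourierCoeff, map_sum, map_mul, ← AddChar.map_neg_eq_conj, neg_neg,
            Finset.mul_sum]
          rw [Finset.sum_comm]
          exact Finset.sum_congr rfl fun _ _ => Finset.sum_congr rfl fun _ _ => by ring
      _ = _ := by
          simp_rw [sum_fourierCoeff_mul_apply, Finset.mul_sum]
          exact Finset.sum_congr rfl fun _ _ => by ring
  simp_rw [Complex.mul_conj, Complex.normSq_eq_norm_sq] at key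
  exact_mod_cast key

theorem card_mul_norm_le_sum_norm_fourierCoeff (f : G → ℂ) (x : G) :
    Fintype.card G * ‖f x‖ ≤ ∑ ψ, ‖fourierCoeff f ψ‖ := by
  calc Fintype.card G * ‖f x‖ = ‖∑ ψ, fourierCoeff f ψ * ψ x‖ := by
        rw [sum_fourierCoeff_mul_apply, norm_mul, Complex.norm_natCast]
    _ ≤ ∑ ψ, ‖fourierCoeff f ψ‖ := by
        refine (norm_sum_le _ _).trans_eq (Finset.sum_congr rfl fun ψ _ => ?_)
        rw [norm_mul, ψ.norm_apply, mul_one]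

theorem sq_card_mul_norm_le_sum_inv_mul_sum (f : G → ℂ) (x : G) {w : AddChar G ℂ → ℝ}
    (hw : ∀ ψ, 0 < w ψ) :
    (Fintype.card G * ‖f x‖) ^ 2 ≤ (∑ ψ, (w ψ)⁻¹) * ∑ ψ, w ψ * ‖fourierCoeff f ψ‖ ^ 2 := by
  refine (pow_le_pow_left₀ (by positivity) (card_mul_norm_le_sum_norm_fourierCoeff f x) 2).trans ?_
  refine Finset.sum_sq_le_sum_mul_sum_of_sq_le_mul _ (fun ψ _ => inv_nonneg.2 (hw ψ).le)
    (fun ψ _ => by have := hw ψ; positivity) fun ψ _ => ?_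
  rw [← mul_assoc, inv_mul_cancel₀ (hw ψ).ne', one_mul]

theorem fourierCoeff_comp_add_right (f : G → ℂ) (s : G) (ψ : AddChar G ℂ) :
    fourierCoeff (fun x => f (x + s)) ψ = ψ s * fourierCoeff f ψ := by
  rw [fourierCoeff, fourierCoeff, Finset.mul_sum]
  refine Fintype.sum_equiv (Equiv.addRight s) _ _ fun x => ?_
  have hs : ψ s * ψ (-s) = 1 := by
    rw [← AddChar.map_add_eq_mul, add_neg_cancel, AddChar.map_zero_eq_one]
  rw [Equiv.coe_addRight, neg_add, AddChar.map_add_eq_mul]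
  linear_combination (-(f (x + s) * ψ (-x))) * hs

end FourierAnalysis

section LatticeSums

noncomputable def decayWeight (t : ℝ) : ℝ := (1 + t ^ 2) ^ (-(2 / 3 : ℝ))

theorem decayWeight_nonneg (t : ℝ) : 0 ≤ decayWeight t := by
  unfold decayWeight
  positivity

theorem summable_one_add_sq_rpow_neg {s : ℝ} (hs : 1 / 2 < s) :
    Summable fun n : ℤ => (1 + (n : ℝ) ^ 2) ^ (-s) := by
  refine Summable.of_norm_bounded_eventually (summable_abs_int_rpow (b := 2 * s) (by linarith)) ?_
  filter_upwards [(Set.finite_singleton (0 : ℤ)).compl_mem_cofinite] with n hn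
  have hn : (0 : ℝ) < (n : ℝ) ^ 2 := by
    have : (n : ℝ) ≠ 0 := Int.cast_ne_zero.2 hn
    positivity
  rw [Real.norm_of_nonneg (by positivity), show -(2 * s) = 2 * -s by ring,
    Real.rpow_mul (abs_nonneg _), Real.rpow_two, sq_abs]
  exact Real.rpow_le_rpow_of_nonpos hn (by linarith) (by linarith)

theorem summable_decayWeight : Summable fun n : ℤ => decayWeight n :=
  summable_one_add_sq_rpow_neg (by norm_num)

theorem inv_sq_le_decayWeight_mul (x y z : ℝ) :
    ((1 + x ^ 2 + y ^ 2 + z ^ 2) ^ 2)⁻¹ ≤ decayWeight x * decayWeight y * decayWeight z := by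
  have hS : 0 ≤ 1 + x ^ 2 + y ^ 2 + z ^ 2 := by positivity
  have hprod : (1 + x ^ 2) * (1 + y ^ 2) * (1 + z ^ 2) ≤ (1 + x ^ 2 + y ^ 2 + z ^ 2) ^ 3 := by
    have hx : 1 + x ^ 2 ≤ 1 + x ^ 2 + y ^ 2 + z ^ 2 := by nlinarith [sq_nonneg y, sq_nonneg z]
    have hy : 1 + y ^ 2 ≤ 1 + x ^ 2 + y ^ 2 + z ^ 2 := by nlinarith [sq_nonneg x, sq_nonneg z]
    have hz : 1 + z ^ 2 ≤ 1 + x ^ 2 + y ^ 2 + z ^ 2 := by nlinarith [sq_nonneg x, sq_nonneg y]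
    calc (1 + x ^ 2) * (1 + y ^ 2) * (1 + z ^ 2)
        ≤ (1 + x ^ 2 + y ^ 2 + z ^ 2) * (1 + x ^ 2 + y ^ 2 + z ^ 2) * (1 + x ^ 2 + y ^ 2 + z ^ 2) :=
          mul_le_mul (mul_le_mul hx hy (by positivity) hS) hz (by positivity) (by positivity)
      _ = (1 + x ^ 2 + y ^ 2 + z ^ 2) ^ 3 := by ring
  calc ((1 + x ^ 2 + y ^ 2 + z ^ 2) ^ 2)⁻¹
      = ((1 + x ^ 2 + y ^ 2 + z ^ 2) ^ 3) ^ (-(2 / 3 : ℝ)) := by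
        rw [← Real.rpow_natCast _ 3, ← Real.rpow_mul hS,
          show ((3 : ℕ) : ℝ) * -(2 / 3) = -2 by norm_num, Real.rpow_neg hS, Real.rpow_two]
    _ ≤ ((1 + x ^ 2) * (1 + y ^ 2) * (1 + z ^ 2)) ^ (-(2 / 3 : ℝ)) :=
        Real.rpow_le_rpow_of_nonpos (by positivity) hprod (by norm_num)
    _ = decayWeight x * decayWeight y * decayWeight z := by
        rw [Real.mul_rpow (by positivity) (by positivity),
          Real.mul_rpow (by positivity) (by positivity)]
        rfl

noncomputable def sobolevConst (L : ℝ) : ℝ :=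
  max 1 (L ^ 2 / 16) ^ 2 * (∑' n : ℤ, decayWeight n) ^ 3

theorem sobolevConst_pos (L : ℝ) : 0 < sobolevConst L := by
  have hsum : 0 < ∑' n : ℤ, decayWeight n := by
    have h0 : decayWeight (0 : ℤ) = 1 := by simp [decayWeight]
    exact one_pos.trans_le (h0 ▸ summable_decayWeight.le_tsum 0 fun n _ => decayWeight_nonneg n)
  have hM : (0 : ℝ) < max 1 (L ^ 2 / 16) := lt_max_of_lt_left one_pos
  unfold sobolevConst
  positivity

end LatticeSums

variable {m : ℕ}

theorem lapH_eq_shifts (h : ℝ) (φ : Grid m → ℝ) (p : Grid m) :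
    lapH h φ p = (φ (p + (1, 0, 0)) + φ (p + -(1, 0, 0)) + φ (p + (0, 1, 0))
      + φ (p + -(0, 1, 0)) + φ (p + (0, 0, 1)) + φ (p + -(0, 0, 1)) - 6 * φ p) / h ^ 2 := by
  obtain ⟨a, b, c⟩ := p
  simp [lapH, sub_eq_add_neg, Prod.mk_add_mk]

noncomputable def lapSymbol (h : ℝ) (ψ : AddChar (Grid m) ℂ) : ℝ :=
  (‖1 - ψ (1, 0, 0)‖ ^ 2 + ‖1 - ψ (0, 1, 0)‖ ^ 2 + ‖1 - ψ (0, 0, 1)‖ ^ 2) / h ^ 2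

theorem lapSymbol_nonneg (h : ℝ) (ψ : AddChar (Grid m) ℂ) : 0 ≤ lapSymbol h ψ := by
  unfold lapSymbol
  positivity

variable [NeZero m]

theorem fourierCoeff_lapH (h : ℝ) (φ : Grid m → ℝ) (ψ : AddChar (Grid m) ℂ) :
    fourierCoeff (fun p => (lapH h φ p : ℂ)) ψ
      = -lapSymbol h ψ * fourierCoeff (fun p => (φ p : ℂ)) ψ := by
  have shift (s : Grid m) :
      ∑ p, (φ (p + s) : ℂ) * ψ (-p) = ψ s * fourierCoeff (fun p => (φ p : ℂ)) ψ :=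
    fourierCoeff_comp_add_right (fun p => (φ p : ℂ)) s ψ
  rw [fourierCoeff]
  simp only [lapH_eq_shifts, Complex.ofReal_div, Complex.ofReal_sub, Complex.ofReal_add,
    Complex.ofReal_mul, Complex.ofReal_pow, div_mul_eq_mul_div, ← Finset.sum_div, add_mul, sub_mul,
    Finset.sum_add_distrib, Finset.sum_sub_distrib, mul_assoc, ← Finset.mul_sum, shift]
  have e₁ := AddChar.apply_add_apply_neg ψ (1, 0, 0)
  have e₂ := AddChar.apply_add_apply_neg ψ (0, 1, 0)
  have e₃ := AddChar.apply_add_apply_neg ψ (0, 0, 1)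
  rw [← fourierCoeff, lapSymbol]
  push_cast at e₁ e₂ e₃ ⊢
  linear_combination (fourierCoeff (fun p => (φ p : ℂ)) ψ / (h : ℂ) ^ 2) * (e₁ + e₂ + e₃)

theorem sum_sq_norm_fourierCoeff_ofReal (g : Grid m → ℝ) :
    ∑ ψ, ‖fourierCoeff (fun p => (g p : ℂ)) ψ‖ ^ 2 = Fintype.card (Grid m) * ∑ p, g p ^ 2 := by
  simpa only [Complex.norm_real, Real.norm_eq_abs, sq_abs] using
    sum_sq_norm_fourierCoeff (fun p => (g p : ℂ))

theorem sum_one_add_lapSymbol_sq_mul_le (h : ℝ) (φ : Grid m → ℝ) :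
    ∑ ψ, (1 + lapSymbol h ψ) ^ 2 * ‖fourierCoeff (fun p => (φ p : ℂ)) ψ‖ ^ 2
      ≤ 2 * Fintype.card (Grid m) * (∑ p, φ p ^ 2 + ∑ p, lapH h φ p ^ 2) := by
  calc ∑ ψ, (1 + lapSymbol h ψ) ^ 2 * ‖fourierCoeff (fun p => (φ p : ℂ)) ψ‖ ^ 2
      ≤ ∑ ψ, 2 * (‖fourierCoeff (fun p => (φ p : ℂ)) ψ‖ ^ 2
          + ‖fourierCoeff (fun p => (lapH h φ p : ℂ)) ψ‖ ^ 2) := by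
        refine Finset.sum_le_sum fun ψ _ => ?_
        rw [fourierCoeff_lapH, norm_mul, norm_neg, Complex.norm_real, Real.norm_eq_abs, mul_pow,
          sq_abs]
        nlinarith [sq_nonneg (1 - lapSymbol h ψ), sq_nonneg ‖fourierCoeff (fun p => (φ p : ℂ)) ψ‖]
    _ = _ := by
        rw [← Finset.mul_sum, Finset.sum_add_distrib, sum_sq_norm_fourierCoeff_ofReal,
          sum_sq_norm_fourierCoeff_ofReal]
        ring

noncomputable def gridChar (k : Grid m) : AddChar (Grid m) ℂ where
  toFun p := ZMod.stdAddChar (k.1 * p.1 + k.2.1 * p.2.1 + k.2.2 * p.2.2)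
  map_zero_eq_one' := by simp
  map_add_eq_mul' p q := by
    rw [← AddChar.map_add_eq_mul]
    congr 1
    simp only [Prod.fst_add, Prod.snd_add]
    ring

@[simp]
theorem gridChar_apply (k p : Grid m) :
    gridChar k p = ZMod.stdAddChar (k.1 * p.1 + k.2.1 * p.2.1 + k.2.2 * p.2.2) := rfl

theorem gridChar_bijective : Function.Bijective (gridChar (m := m)) := by
  refine (Fintype.bijective_iff_injective_and_card _).2 ⟨fun k k' hk => ?_, AddChar.card_eq.symm⟩
  have eval (p : Grid m) := DFunLike.congr_fun hk p
  have h₁ := ZMod.injective_stdAddChar (by simpa using eval (1, 0, 0))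
  have h₂ := ZMod.injective_stdAddChar (by simpa using eval (0, 1, 0))
  have h₃ := ZMod.injective_stdAddChar (by simpa using eval (0, 0, 1))
  exact Prod.ext h₁ (Prod.ext h₂ h₃)

theorem four_mul_abs_div_le_norm_one_sub_stdAddChar {a : ℤ} (ha : 2 * |a| ≤ m) :
    4 * |(a : ℝ)| / m ≤ ‖1 - ZMod.stdAddChar (a : ZMod m)‖ := by
  have hm : (0 : ℝ) < m := Nat.cast_pos.2 (Nat.pos_of_ne_zero (NeZero.ne m))
  have hx : |π * a / m| ≤ π / 2 := by
    have : 2 * |(a : ℝ)| ≤ m := by exact_mod_cast ha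
    rw [abs_div, abs_mul, abs_of_pos pi_pos, abs_of_pos hm, div_le_div_iff₀ hm two_pos]
    nlinarith [pi_pos]
  have hexp :
      ZMod.stdAddChar (a : ZMod m) = Complex.exp (Complex.I * ((2 * π * a / m : ℝ) : ℂ)) := by
    rw [ZMod.stdAddChar_coe]
    push_cast
    ring_nf
  rw [hexp, norm_sub_rev, Complex.norm_exp_I_mul_ofReal_sub_one, norm_mul, Real.norm_two,
    Real.norm_eq_abs, show 2 * π * a / m / 2 = π * a / m by ring]
  calc 4 * |(a : ℝ)| / m = 2 * (2 / π * |π * a / m|) := by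
        rw [abs_div, abs_mul, abs_of_pos pi_pos, abs_of_pos hm]
        field_simp
        ring
    _ ≤ 2 * |sin (π * a / m)| := by gcongr; exact mul_abs_le_abs_sin hx

theorem four_mul_abs_valMinAbs_div_le_norm_one_sub_stdAddChar (j : ZMod m) :
    4 * |(j.valMinAbs : ℝ)| / m ≤ ‖1 - ZMod.stdAddChar j‖ := by
  conv_rhs => rw [← ZMod.coe_valMinAbs j]
  refine four_mul_abs_div_le_norm_one_sub_stdAddChar ?_
  have := j.natAbs_valMinAbs_le
  rw [Int.abs_eq_natAbs]
  omega

theorem le_lapSymbol_gridChar (h : ℝ) (k : Grid m) :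
    16 / (h * m) ^ 2 * ((k.1.valMinAbs : ℝ) ^ 2 + (k.2.1.valMinAbs : ℝ) ^ 2
      + (k.2.2.valMinAbs : ℝ) ^ 2) ≤ lapSymbol h (gridChar k) := by
  have hm : (m : ℝ) ≠ 0 := Nat.cast_ne_zero.2 (NeZero.ne m)
  have hsq (j : ZMod m) : 16 * (j.valMinAbs : ℝ) ^ 2 / m ^ 2 ≤ ‖1 - ZMod.stdAddChar j‖ ^ 2 := by
    calc 16 * (j.valMinAbs : ℝ) ^ 2 / m ^ 2 = (4 * |(j.valMinAbs : ℝ)| / m) ^ 2 := by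
          rw [div_pow, mul_pow, sq_abs]
          norm_num
      _ ≤ ‖1 - ZMod.stdAddChar j‖ ^ 2 := by
          gcongr
          exact four_mul_abs_valMinAbs_div_le_norm_one_sub_stdAddChar j
  calc 16 / (h * m) ^ 2 * ((k.1.valMinAbs : ℝ) ^ 2 + (k.2.1.valMinAbs : ℝ) ^ 2
        + (k.2.2.valMinAbs : ℝ) ^ 2)
      = (16 * (k.1.valMinAbs : ℝ) ^ 2 / m ^ 2 + 16 * (k.2.1.valMinAbs : ℝ) ^ 2 / m ^ 2
          + 16 * (k.2.2.valMinAbs : ℝ) ^ 2 / m ^ 2) / h ^ 2 := by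
        field_simp
    _ ≤ lapSymbol h (gridChar k) := by
        simp only [lapSymbol, gridChar_apply]
        gcongr <;> simpa using hsq _

theorem sum_grid_mul_mul {R : Type*} [CommSemiring R] (f : ZMod m → R) :
    ∑ k : Grid m, f k.1 * f k.2.1 * f k.2.2 = (∑ j, f j) ^ 3 := by
  simp only [Fintype.sum_prod_type, mul_assoc, ← Finset.mul_sum, ← Finset.sum_mul]
  ring

theorem inv_one_add_lapSymbol_gridChar_sq_le {L h : ℝ} (hL : 0 < L) (hhm : h * m = L)
    (k : Grid m) :
    ((1 + lapSymbol h (gridChar k)) ^ 2)⁻¹ ≤ max 1 (L ^ 2 / 16) ^ 2 * (decayWeight k.1.valMinAbs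
      * decayWeight k.2.1.valMinAbs * decayWeight k.2.2.valMinAbs) := by
  have hσ := le_lapSymbol_gridChar h k
  rw [hhm] at hσ
  set t := (k.1.valMinAbs : ℝ) ^ 2 + (k.2.1.valMinAbs : ℝ) ^ 2 + (k.2.2.valMinAbs : ℝ) ^ 2
  set σ := lapSymbol h (gridChar k)
  set M := max 1 (L ^ 2 / 16)
  have hM : 0 < M := lt_max_of_lt_left one_pos
  have hbracket : (1 + t) / M ≤ 1 + σ := by
    rw [div_le_iff₀ hM]
    calc 1 + t = 1 + L ^ 2 / 16 * (16 / L ^ 2 * t) := by field_simp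
      _ ≤ M + M * σ := add_le_add (le_max_left _ _)
          (mul_le_mul (le_max_right _ _) hσ (by positivity) hM.le)
      _ = (1 + σ) * M := by ring
  calc ((1 + σ) ^ 2)⁻¹ ≤ (((1 + t) / M) ^ 2)⁻¹ := by gcongr
    _ = M ^ 2 * ((1 + t) ^ 2)⁻¹ := by rw [div_pow, inv_div, div_eq_mul_inv]
    _ ≤ _ := by
        gcongr
        simpa only [t, add_assoc] using
          inv_sq_le_decayWeight_mul (k.1.valMinAbs : ℝ) k.2.1.valMinAbs k.2.2.valMinAbs

theorem sum_inv_one_add_lapSymbol_sq_le {L h : ℝ} (hL : 0 < L) (hhm : h * m = L) :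
    ∑ ψ : AddChar (Grid m) ℂ, ((1 + lapSymbol h ψ) ^ 2)⁻¹ ≤ sobolevConst L := by
  rw [← gridChar_bijective.sum_comp]
  calc ∑ k, ((1 + lapSymbol h (gridChar k)) ^ 2)⁻¹
      ≤ ∑ k : Grid m, max 1 (L ^ 2 / 16) ^ 2 * (decayWeight k.1.valMinAbs
          * decayWeight k.2.1.valMinAbs * decayWeight k.2.2.valMinAbs) :=
        Finset.sum_le_sum fun k _ => inv_one_add_lapSymbol_gridChar_sq_le hL hhm k
    _ = max 1 (L ^ 2 / 16) ^ 2 * (∑ j : ZMod m, decayWeight j.valMinAbs) ^ 3 := by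
        rw [← Finset.mul_sum, sum_grid_mul_mul fun j => decayWeight j.valMinAbs]
    _ ≤ sobolevConst L := by
        rw [sobolevConst, ← tsum_fintype (L := .unconditional _)]
        gcongr
        · exact tsum_nonneg fun j => decayWeight_nonneg _
        · exact tsum_comp_le_tsum_of_inj summable_decayWeight (fun n => decayWeight_nonneg n)
            fun a b hab => ZMod.valMinAbs_inj.1 hab

theorem sq_le_sobolevConst_mul_h22sq {L : ℝ} (hL : 0 < L) (φ : Grid m → ℝ) (p : Grid m) :
    φ p ^ 2 ≤ 2 * sobolevConst L / L ^ 3 * h22sq (L / m) φ := by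
  set h := L / m
  have hm : (0 : ℝ) < m := Nat.cast_pos.2 (Nat.pos_of_ne_zero (NeZero.ne m))
  have hh : 0 < h := div_pos hL hm
  have hhm : h * m = L := div_mul_cancel₀ L hm.ne'
  set N := (Fintype.card (Grid m) : ℝ)
  have hN : N * h ^ 3 = L ^ 3 := by
    simp only [N, Fintype.card_prod, ZMod.card, Nat.cast_mul, ← hhm]
    ring
  set A := ∑ q, φ q ^ 2 + ∑ q, lapH h φ q ^ 2
  have hA : h ^ 3 * A ≤ h22sq h φ := by
    have : 0 ≤ gradsq h φ := by unfold gradsq; positivity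
    rw [h22sq, norm2sq, norm2sq]
    linarith [mul_add (h ^ 3) (∑ q, φ q ^ 2) (∑ q, lapH h φ q ^ 2)]
  have key : (N * |φ p|) ^ 2 ≤ sobolevConst L * (2 * N * A) := by
    have cs := sq_card_mul_norm_le_sum_inv_mul_sum (fun q => (φ q : ℂ)) p
      (w := fun ψ => (1 + lapSymbol h ψ) ^ 2) fun ψ => by have := lapSymbol_nonneg h ψ; positivity
    rw [Complex.norm_real, Real.norm_eq_abs] at cs
    exact cs.trans (mul_le_mul (sum_inv_one_add_lapSymbol_sq_le hL hhm)
      (sum_one_add_lapSymbol_sq_mul_le h φ) (by positivity) (sobolevConst_pos L).le)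
  have hN0 : 0 < N := by positivity
  calc φ p ^ 2 = (N * |φ p|) ^ 2 / N ^ 2 := by field_simp; rw [sq_abs]
    _ ≤ sobolevConst L * (2 * N * A) / N ^ 2 := by gcongr
    _ = 2 * sobolevConst L / L ^ 3 * (h ^ 3 * A) := by rw [← hN]; field_simp
    _ ≤ 2 * sobolevConst L / L ^ 3 * h22sq h φ := by
        have := sobolevConst_pos L
        gcongr

end DiscreteSobolev

/-- Three-dimensional discrete Sobolev inequality: `‖φ‖_∞ ≤ C ‖φ‖_{2,2}` with a constant `C`
depending only on `L`, for every odd positive integer `m`. -/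
theorem stmt7 (L : ℝ) (hL : 0 < L) :
    ∃ C : ℝ, 0 < C ∧
      ∀ (m : ℕ) [NeZero m], Odd m →
        ∀ φ : Grid m → ℝ, normInf φ ≤ C * Real.sqrt (h22sq (L / m) φ) := by
  have hc : 0 < 2 * DiscreteSobolev.sobolevConst L / L ^ 3 := by
    have := DiscreteSobolev.sobolevConst_pos L
    positivity
  refine ⟨Real.sqrt (2 * DiscreteSobolev.sobolevConst L / L ^ 3), Real.sqrt_pos.2 hc,
    fun m _ _ φ => ciSup_le fun p => ?_⟩
  rw [← Real.sqrt_mul hc.le, ← Real.sqrt_sq_eq_abs]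
  exact Real.sqrt_le_sqrt (DiscreteSobolev.sq_le_sobolevConst_mul_h22sq hL φ p)
end

section
/- Estimate for the explicitly treated concave diffusion term: for any periodic grid functions a, b, c (representing e^{κ−1}, e^κ, e^{κ+1}), writing m⁺ = ½(c + b) and m⁻ = ½(b + a), one has ⟨ Δ_h(3Δ_h b − Δ_h a), m⁺ ⟩ ≤ 5‖Δ_h m⁺‖₂² + ‖Δ_h m⁻‖₂² − ‖Δ_h c‖₂² + ‖Δ_h b‖₂². -/
open Finset Real

def shX {m : ℕ} : Grid m ≃ Grid m :=
  ⟨fun p => (p.1 + 1, p.2), fun p => (p.1 - 1, p.2),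
   fun p => by simp, fun p => by simp⟩

def shY {m : ℕ} : Grid m ≃ Grid m :=
  ⟨fun p => (p.1, p.2.1 + 1, p.2.2), fun p => (p.1, p.2.1 - 1, p.2.2),
   fun p => by simp, fun p => by simp⟩

def shZ {m : ℕ} : Grid m ≃ Grid m :=
  ⟨fun p => (p.1, p.2.1, p.2.2 + 1), fun p => (p.1, p.2.1, p.2.2 - 1),
   fun p => by simp, fun p => by simp⟩

lemma HXp {m : ℕ} [NeZero m] (u v : Grid m → ℝ) :
    ∑ p : Grid m, u (p.1 + 1, p.2.1, p.2.2) * v p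
      = ∑ p : Grid m, u p * v (p.1 - 1, p.2.1, p.2.2) := by
  rw [← Equiv.sum_comp (shX (m := m)).symm
    (fun p => u (p.1 + 1, p.2.1, p.2.2) * v p)]
  exact Finset.sum_congr rfl fun p _ => by simp [shX]

lemma HXm {m : ℕ} [NeZero m] (u v : Grid m → ℝ) :
    ∑ p : Grid m, u (p.1 - 1, p.2.1, p.2.2) * v p
      = ∑ p : Grid m, u p * v (p.1 + 1, p.2.1, p.2.2) := by
  rw [← Equiv.sum_comp (shX (m := m))
    (fun p => u (p.1 - 1, p.2.1, p.2.2) * v p)]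
  exact Finset.sum_congr rfl fun p _ => by simp [shX]

lemma HYp {m : ℕ} [NeZero m] (u v : Grid m → ℝ) :
    ∑ p : Grid m, u (p.1, p.2.1 + 1, p.2.2) * v p
      = ∑ p : Grid m, u p * v (p.1, p.2.1 - 1, p.2.2) := by
  rw [← Equiv.sum_comp (shY (m := m)).symm
    (fun p => u (p.1, p.2.1 + 1, p.2.2) * v p)]
  exact Finset.sum_congr rfl fun p _ => by simp [shY]

lemma HYm {m : ℕ} [NeZero m] (u v : Grid m → ℝ) :
    ∑ p : Grid m, u (p.1, p.2.1 - 1, p.2.2) * v p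
      = ∑ p : Grid m, u p * v (p.1, p.2.1 + 1, p.2.2) := by
  rw [← Equiv.sum_comp (shY (m := m))
    (fun p => u (p.1, p.2.1 - 1, p.2.2) * v p)]
  exact Finset.sum_congr rfl fun p _ => by simp [shY]

lemma HZp {m : ℕ} [NeZero m] (u v : Grid m → ℝ) :
    ∑ p : Grid m, u (p.1, p.2.1, p.2.2 + 1) * v p
      = ∑ p : Grid m, u p * v (p.1, p.2.1, p.2.2 - 1) := by
  rw [← Equiv.sum_comp (shZ (m := m)).symm
    (fun p => u (p.1, p.2.1, p.2.2 + 1) * v p)]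
  exact Finset.sum_congr rfl fun p _ => by simp [shZ]

lemma HZm {m : ℕ} [NeZero m] (u v : Grid m → ℝ) :
    ∑ p : Grid m, u (p.1, p.2.1, p.2.2 - 1) * v p
      = ∑ p : Grid m, u p * v (p.1, p.2.1, p.2.2 + 1) := by
  rw [← Equiv.sum_comp (shZ (m := m))
    (fun p => u (p.1, p.2.1, p.2.2 - 1) * v p)]
  exact Finset.sum_congr rfl fun p _ => by simp [shZ]

lemma sbp_s19 {m : ℕ} [NeZero m] (h : ℝ) (f g : Grid m → ℝ) :
    ∑ p : Grid m, lapH h f p * g p = ∑ p : Grid m, f p * lapH h g p := by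
  have expandL : ∀ p : Grid m, lapH h f p * g p =
      (f (p.1 + 1, p.2.1, p.2.2) * g p + f (p.1 - 1, p.2.1, p.2.2) * g p
        + f (p.1, p.2.1 + 1, p.2.2) * g p + f (p.1, p.2.1 - 1, p.2.2) * g p
        + f (p.1, p.2.1, p.2.2 + 1) * g p + f (p.1, p.2.1, p.2.2 - 1) * g p
        - 6 * (f p * g p)) / h ^ 2 := fun p => by simp only [lapH]; ring
  have expandR : ∀ p : Grid m, f p * lapH h g p =
      (f p * g (p.1 + 1, p.2.1, p.2.2) + f p * g (p.1 - 1, p.2.1, p.2.2)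
        + f p * g (p.1, p.2.1 + 1, p.2.2) + f p * g (p.1, p.2.1 - 1, p.2.2)
        + f p * g (p.1, p.2.1, p.2.2 + 1) + f p * g (p.1, p.2.1, p.2.2 - 1)
        - 6 * (f p * g p)) / h ^ 2 := fun p => by simp only [lapH]; ring
  simp only [expandL, expandR, ← Finset.sum_div, Finset.sum_sub_distrib,
    Finset.sum_add_distrib, ← Finset.mul_sum]
  rw [HXp f g, HXm f g, HYp f g, HYm f g, HZp f g, HZm f g]
  congr 1
  ring

/-- Estimate for the explicitly treated concave diffusion term. -/
theorem stmt19 (L : ℝ) (hL : 0 < L) (m : ℕ) [NeZero m] (h : ℝ) (hh : h = L / m)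
    (a b c : Grid m → ℝ) (mp mm : Grid m → ℝ)
    (hmp : mp = fun p => (1 / 2) * (c p + b p))
    (hmm : mm = fun p => (1 / 2) * (b p + a p)) :
    ip h (lapH h (fun p => 3 * lapH h b p - lapH h a p)) mp ≤
      5 * norm2sq h (lapH h mp) + norm2sq h (lapH h mm)
        - norm2sq h (lapH h c) + norm2sq h (lapH h b) := by
  have hhpos : 0 ≤ h := by
    rw [hh]; positivity
  have keyP : ∀ p : Grid m, lapH h mp p = (lapH h c p + lapH h b p) / 2 := by
    intro p; simp only [hmp, lapH]; ring
  have keyM : ∀ p : Grid m, lapH h mm p = (lapH h b p + lapH h a p) / 2 := by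
    intro p; simp only [hmm, lapH]; ring
  have hsum : ∑ p : Grid m, (3 * lapH h b p - lapH h a p) * lapH h mp p ≤
      ∑ p : Grid m, (5 * (lapH h mp p) ^ 2 + (lapH h mm p) ^ 2
        - (lapH h c p) ^ 2 + (lapH h b p) ^ 2) := by
    refine Finset.sum_le_sum fun p _ => ?_
    rw [keyP p, keyM p]
    nlinarith [sq_nonneg (lapH h c p + 2 * lapH h b p + lapH h a p)]
  calc ip h (lapH h (fun p => 3 * lapH h b p - lapH h a p)) mp
      = h ^ 3 * ∑ p : Grid m, (3 * lapH h b p - lapH h a p) * lapH h mp p := by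
        rw [ip, sbp_s19]
    _ ≤ h ^ 3 * ∑ p : Grid m, (5 * (lapH h mp p) ^ 2 + (lapH h mm p) ^ 2
          - (lapH h c p) ^ 2 + (lapH h b p) ^ 2) := by
        exact mul_le_mul_of_nonneg_left hsum (by positivity)
    _ = 5 * norm2sq h (lapH h mp) + norm2sq h (lapH h mm)
          - norm2sq h (lapH h c) + norm2sq h (lapH h b) := by
        simp only [norm2sq, Finset.sum_add_distrib, Finset.sum_sub_distrib,
          ← Finset.mul_sum]
        ring
end
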